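/- Let X be a random vector in R^n satisfying the weak small-ball assumption with constants θ and L, and let T : R^n → R^m be linear. Let σ ⊂ {1,...,m} be such that the restriction P_σ T (projection onto coordinates in σ) has all its |σ| nonzero singular values at least γ^{−1} for some γ ≥ 1. Then for every τ ⊂ σ, P(‖P_τ T X‖_2 ≤ θ√|τ|) ≤ (c·γ·θ·L)^{|τ|}, where c is an absolute constant. -/

import Mathlib

/-
Write `B = P_τ T`. The hypothesis on `σ` gives `‖Bᵀ u‖ ≥ γ⁻¹ ‖u‖`, so `S = (B Bᵀ)^{1/2}` is
invertible and `A = S⁻¹ B` has orthonormal rows with `‖A x‖ ≤ γ ‖B x‖`. The event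
`‖B X‖ ≤ θ √k` is therefore contained in `‖A X‖ ≤ γ θ √k`. A volumetric packing bound covers
that ball of `ℝ^k` by `(2γ + 1)^k` balls of radius `θ √k`, and the small-ball assumption applied
to `A` bounds each of them by `(L θ)^k`; hence the constant `c = 3`.
-/

open MeasureTheory Matrix
open scoped BigOperators

/-- Euclidean norm of a finitely-indexed real vector. -/
noncomputable def euclNorm {ι : Type*} [Fintype ι] (v : ι → ℝ) : ℝ :=
  Real.sqrt (∑ i, v i ^ 2)

/-- The weak small-ball assumption (wSBA) with constants `θ` and `L`. -/
def SatisfiesWSBA {Ω : Type*} [MeasurableSpace Ω] (μ : Measure Ω) (n : ℕ)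
    (X : Ω → Fin n → ℝ) (θ L : ℝ) : Prop :=
  ∀ k : ℕ, 1 ≤ k → k ≤ n - 1 →
    ∀ A : Matrix (Fin k) (Fin n) ℝ, A * A.transpose = 1 →
      ∀ z : Fin k → ℝ,
        μ {ω | euclNorm (A.mulVec (X ω) - z) ≤ θ * Real.sqrt k} ≤
          ENNReal.ofReal ((L * θ) ^ k)

open Module Metric
open scoped NNReal ENNReal

section Packing

variable {E : Type*} [NormedAddCommGroup E] [NormedSpace ℝ E] [FiniteDimensional ℝ E]

theorem Metric.IsSeparated.card_le_of_subset_closedBall {s : Finset E} {x : E} {R : ℝ}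
    {ε : ℝ≥0} (hε : 0 < ε) (hR : 0 ≤ R) (hs : (s : Set E) ⊆ closedBall x R)
    (hsep : IsSeparated ε (s : Set E)) :
    (s.card : ℝ) ≤ ((2 * R + ε) / ε) ^ finrank ℝ E := by
  borelize E
  set μ : Measure E := Measure.addHaar
  set d := finrank ℝ E
  have hε' : (0 : ℝ) < ε := hε
  have hdisj : (s : Set E).PairwiseDisjoint (fun z => ball z (ε / 2)) := fun z hz w hw hzw =>
    ball_disjoint_ball <| by
      have hzw' : (ε : ℝ≥0∞) < edist z w := hsep hz hw hzw
      rw [edist_nndist, ENNReal.coe_lt_coe, ← NNReal.coe_lt_coe, coe_nndist] at hzw'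
      linarith
  have hunion : (⋃ z ∈ s, ball z (ε / 2)) ⊆ closedBall x (R + ε / 2) := by
    refine Set.iUnion₂_subset fun z hz => (ball_subset_ball' ?_).trans ball_subset_closedBall
    linarith [mem_closedBall.mp (hs hz)]
  have hvol : (s.card : ℝ≥0∞) * (ENNReal.ofReal ((ε / 2) ^ d) * μ (ball 0 1)) ≤
      ENNReal.ofReal ((R + ε / 2) ^ d) * μ (ball 0 1) :=
    calc (s.card : ℝ≥0∞) * (ENNReal.ofReal ((ε / 2) ^ d) * μ (ball 0 1))
        = ∑ z ∈ s, μ (ball z (ε / 2)) := by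
          simp [Measure.addHaar_ball_of_pos μ _ (half_pos hε'), d]
      _ = μ (⋃ z ∈ s, ball z (ε / 2)) :=
          (measure_biUnion_finset hdisj fun z _ => measurableSet_ball).symm
      _ ≤ μ (closedBall x (R + ε / 2)) := measure_mono hunion
      _ = _ := Measure.addHaar_closedBall μ x (by positivity)
  rw [← mul_assoc, ENNReal.mul_le_mul_iff_left (measure_ball_pos μ _ one_pos).ne'
    measure_ball_lt_top.ne, ← ENNReal.ofReal_natCast, ← ENNReal.ofReal_mul (by positivity),
    ENNReal.ofReal_le_ofReal_iff (by positivity), ← le_div_iff₀ (by positivity),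
    ← div_pow] at hvol
  rwa [show (2 * R + ε) / ε = (R + ε / 2) / (ε / 2) by field_simp]

theorem Metric.IsSeparated.encard_le_of_subset_closedBall {C : Set E} {x : E} {R : ℝ}
    {ε : ℝ≥0} (hε : 0 < ε) (hR : 0 ≤ R) (hC : C ⊆ closedBall x R) (hsep : IsSeparated ε C) :
    C.encard ≤ ⌊((2 * R + ε) / ε) ^ finrank ℝ E⌋₊ := by
  by_contra! hlt
  obtain ⟨t, htC, htcard⟩ := Set.exists_subset_encard_eq (Order.add_one_le_of_lt hlt)
  lift t to Finset E using Set.finite_of_encard_eq_coe htcard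
  have hcard := (hsep.subset htC).card_le_of_subset_closedBall hε hR (htC.trans hC)
  rw [Set.encard_coe_eq_coe_finsetCard, ← ENat.natCast_one, ← ENat.natCast_add,
    ENat.natCast_inj] at htcard
  rw [htcard, Nat.cast_add_one] at hcard
  exact (Nat.lt_floor_add_one _).not_ge hcard

theorem exists_finset_card_le_closedBall_subset_biUnion (x : E) {R : ℝ} {ε : ℝ≥0}
    (hε : 0 < ε) (hR : 0 ≤ R) :
    ∃ s : Finset E, (s.card : ℝ) ≤ ((2 * R + ε) / ε) ^ finrank ℝ E ∧
      closedBall x R ⊆ ⋃ z ∈ s, closedBall z ε := by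
  have hpack : packingNumber ε (closedBall x R) ≠ ⊤ :=
    ne_top_of_le_ne_top (ENat.natCast_ne_top _) <| iSup₂_le fun _ hC => iSup_le fun hsep =>
      hsep.encard_le_of_subset_closedBall hε hR hC
  have hfin : (maximalSeparatedSet ε (closedBall x R)).Finite :=
    Set.encard_ne_top_iff.mp (encard_maximalSeparatedSet hpack ▸ hpack)
  have hcover := (isCover_maximalSeparatedSet hpack).subset_iUnion_closedBall
  have hsep := isSeparated_maximalSeparatedSet (ε := ε) (A := closedBall x R)
  have hsub := maximalSeparatedSet_subset (ε := ε) (A := closedBall x R)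
  lift maximalSeparatedSet ε (closedBall x R) to Finset E using hfin with s
  exact ⟨s, hsep.card_le_of_subset_closedBall hε hR hsub, by simpa using hcover⟩

end Packing

section EuclNorm

variable {ι : Type*} [Fintype ι]

lemma euclNorm_eq_norm_toLp (v : ι → ℝ) :
    euclNorm v = ‖WithLp.toLp 2 v‖ := by
  simp [euclNorm, EuclideanSpace.norm_eq]

lemma euclNorm_eq_sqrt_dotProduct (v : ι → ℝ) :
    euclNorm v = Real.sqrt (v ⬝ᵥ v) := by
  simp [euclNorm, dotProduct, sq]

@[simp]
lemma euclNorm_zero : euclNorm (0 : ι → ℝ) = 0 := by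
  simp [euclNorm]

lemma euclNorm_pos {v : ι → ℝ} (hv : v ≠ 0) : 0 < euclNorm v := by
  simpa [euclNorm_eq_norm_toLp] using hv

lemma euclNorm_comp_equiv {ι' : Type*} [Fintype ι'] (v : ι → ℝ) (e : ι' ≃ ι) :
    euclNorm (v ∘ e) = euclNorm v := by
  rw [euclNorm, euclNorm, ← e.sum_comp]; rfl

variable (ι) in
lemma exists_finset_euclNorm_sub_le {R r : ℝ} (hr : 0 < r) (hR : 0 ≤ R) :
    ∃ s : Finset (ι → ℝ), (s.card : ℝ) ≤ ((2 * R + r) / r) ^ Fintype.card ι ∧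
      ∀ v, euclNorm v ≤ R → ∃ z ∈ s, euclNorm (v - z) ≤ r := by
  classical
  obtain ⟨s, hcard, hcover⟩ := exists_finset_card_le_closedBall_subset_biUnion
    (0 : EuclideanSpace ℝ ι) (ε := r.toNNReal) (by simpa using hr) hR
  refine ⟨s.image WithLp.ofLp, ?_, fun v hv => ?_⟩
  · simpa [hr.le] using (Nat.cast_le.mpr Finset.card_image_le).trans hcard
  · have hvR : WithLp.toLp 2 v ∈ closedBall 0 R := by simpa [euclNorm_eq_norm_toLp] using hv
    have := hcover hvR
    simp only [Set.mem_iUnion, mem_closedBall, Real.coe_toNNReal _ hr.le, exists_prop] at this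
    obtain ⟨z, hz, hdist⟩ := this
    exact ⟨z.ofLp, Finset.mem_image_of_mem _ hz,
      by simpa [euclNorm_eq_norm_toLp, dist_eq_norm] using hdist⟩

end EuclNorm

section OrthonormalRows

variable {ι κ : Type*} [Fintype ι] [Fintype κ]

lemma mulVec_dotProduct_mulVec {μ : Type*} [Fintype μ] (M : Matrix μ ι ℝ) (u : ι → ℝ) :
    M *ᵥ u ⬝ᵥ M *ᵥ u = u ⬝ᵥ (Mᵀ * M) *ᵥ u := by
  rw [dotProduct_mulVec, ← mulVec_mulVec, mulVec_transpose]
  exact dotProduct_comm ..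

lemma euclNorm_mulVec_eq_of_transpose_mul_eq {m₁ m₂ : Type*} [Fintype m₁] [Fintype m₂]
    {S : Matrix m₁ ι ℝ} {C : Matrix m₂ ι ℝ} (h : Sᵀ * S = Cᵀ * C) (u : ι → ℝ) :
    euclNorm (S *ᵥ u) = euclNorm (C *ᵥ u) := by
  rw [euclNorm_eq_sqrt_dotProduct, euclNorm_eq_sqrt_dotProduct, mulVec_dotProduct_mulVec,
    mulVec_dotProduct_mulVec, h]

lemma euclNorm_transpose_mulVec_of_mul_transpose_eq_one [DecidableEq ι] {A : Matrix ι κ ℝ}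
    (hA : A * Aᵀ = 1) (u : ι → ℝ) : euclNorm (Aᵀ *ᵥ u) = euclNorm u := by
  simpa using euclNorm_mulVec_eq_of_transpose_mul_eq (C := (1 : Matrix ι ι ℝ))
    (by rwa [transpose_transpose, transpose_one, Matrix.one_mul]) u

variable [DecidableEq ι]

open scoped MatrixOrder in
theorem exists_mul_transpose_eq_one_euclNorm_mulVec_le {γ : ℝ} (hγ : 0 < γ)
    (B : Matrix ι κ ℝ) (hB : ∀ u, γ⁻¹ * euclNorm u ≤ euclNorm (Bᵀ *ᵥ u)) :
    ∃ A : Matrix ι κ ℝ, A * Aᵀ = 1 ∧ ∀ x, euclNorm (A *ᵥ x) ≤ γ * euclNorm (B *ᵥ x) := by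
  have hBinj : Function.Injective B.vecMul := fun u v huv => by
    by_contra hne
    have hpos : 0 < γ⁻¹ * euclNorm (u - v) := by
      have := euclNorm_pos (sub_ne_zero.mpr hne); positivity
    have hzero := hB (u - v)
    rw [mulVec_transpose, sub_vecMul, show u ᵥ* B = v ᵥ* B from huv, sub_self,
      euclNorm_zero] at hzero
    linarith
  have hG : (B * Bᵀ).PosDef := by
    simpa using PosDef.mul_conjTranspose_self B hBinj
  set S := CFC.sqrt (B * Bᵀ)
  have hSS : S * S = B * Bᵀ := CFC.sqrt_mul_sqrt_self _ hG.posSemidef.nonneg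
  have hSsymm : Sᵀ = S := (CFC.sqrt_nonneg _).posSemidef.1
  have hSdet : IsUnit S.det := (isUnit_iff_isUnit_det S).mp <|
    (CFC.isUnit_sqrt_iff _ hG.posSemidef.nonneg).mpr hG.isUnit
  refine ⟨S⁻¹ * B, ?_, fun x => ?_⟩
  · calc S⁻¹ * B * (S⁻¹ * B)ᵀ = S⁻¹ * (S * S) * S⁻¹ := by
          rw [hSS, transpose_mul, transpose_nonsing_inv, hSsymm]; simp only [Matrix.mul_assoc]
      _ = 1 := by
          rw [← Matrix.mul_assoc, nonsing_inv_mul _ hSdet, Matrix.one_mul, mul_nonsing_inv _ hSdet]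
  · have hSu : S *ᵥ (S⁻¹ *ᵥ (B *ᵥ x)) = B *ᵥ x := by
      rw [mulVec_mulVec, mul_nonsing_inv _ hSdet, one_mulVec]
    have := hB (S⁻¹ *ᵥ (B *ᵥ x))
    rw [← euclNorm_mulVec_eq_of_transpose_mul_eq (S := S) (C := Bᵀ)
      (by rw [hSsymm, hSS, transpose_transpose]), hSu, inv_mul_le_iff₀ hγ] at this
    rwa [← mulVec_mulVec]

end OrthonormalRows

section CoordinateProjection

variable {m : Type*} [DecidableEq m]

/-- `P_τ`, with rows indexed by `τ`. -/
def coordProj (τ : Finset m) : Matrix τ m ℝ :=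
  (1 : Matrix m m ℝ).submatrix (↑) id

lemma transpose_coordProj_mulVec_apply_of_notMem {τ : Finset m} (u : τ → ℝ) {i : m}
    (hi : i ∉ τ) : ((coordProj τ)ᵀ *ᵥ u) i = 0 := by
  simp only [coordProj, mulVec, dotProduct, transpose_apply, submatrix_apply, id, one_apply]
  exact Finset.sum_eq_zero fun j _ => if_neg (ne_of_mem_of_not_mem j.2 hi) ▸ zero_mul _

variable [Fintype m]

lemma coordProj_mulVec (τ : Finset m) (v : m → ℝ) : coordProj τ *ᵥ v = fun i : τ => v i := by
  ext i
  change (1 *ᵥ v) (i : m) = v i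
  rw [one_mulVec]

lemma coordProj_mul_transpose (τ : Finset m) : coordProj τ * (coordProj τ)ᵀ = 1 := by
  rw [coordProj, transpose_submatrix, transpose_one,
    ← submatrix_mul _ _ _ _ _ Function.bijective_id, Matrix.one_mul,
    submatrix_one _ Subtype.val_injective]

lemma euclNorm_coordProj_mulVec (τ : Finset m) (v : m → ℝ) :
    euclNorm (coordProj τ *ᵥ v) = √(∑ i ∈ τ, v i ^ 2) := by
  rw [coordProj_mulVec, euclNorm, Finset.sum_coe_sort τ (fun i => v i ^ 2)]

lemma le_euclNorm_transpose_coordProj_mul_mulVec {k : Type*} [Fintype k] {T : Matrix m k ℝ}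
    {γ : ℝ} {σ τ : Finset m} (hτσ : τ ⊆ σ)
    (hσ : ∀ y : m → ℝ, (∀ i, i ∉ σ → y i = 0) → γ⁻¹ * euclNorm y ≤ euclNorm (Tᵀ *ᵥ y))
    (u : τ → ℝ) : γ⁻¹ * euclNorm u ≤ euclNorm ((coordProj τ * T)ᵀ *ᵥ u) := by
  have hy := hσ ((coordProj τ)ᵀ *ᵥ u) fun i hi =>
    transpose_coordProj_mulVec_apply_of_notMem u fun hiτ => hi (hτσ hiτ)
  rwa [euclNorm_transpose_mulVec_of_mul_transpose_eq_one (coordProj_mul_transpose τ),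
    mulVec_mulVec, ← transpose_mul] at hy

end CoordinateProjection

namespace SatisfiesWSBA

variable {Ω : Type*} [MeasurableSpace Ω] {μ : Measure Ω} {n : ℕ} {X : Ω → Fin n → ℝ} {θ L : ℝ}
  {ι : Type*} [Fintype ι] [DecidableEq ι]

lemma measure_euclNorm_mulVec_sub_le (hX : SatisfiesWSBA μ n X θ L)
    (hι : 1 ≤ Fintype.card ι) (hιn : Fintype.card ι ≤ n - 1) {A : Matrix ι (Fin n) ℝ}
    (hA : A * Aᵀ = 1) (z : ι → ℝ) :
    μ {ω | euclNorm (A *ᵥ X ω - z) ≤ θ * √(Fintype.card ι)} ≤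
      ENNReal.ofReal ((L * θ) ^ Fintype.card ι) := by
  set e := (Fintype.equivFin ι).symm
  have hA' : A.submatrix e id * (A.submatrix e id)ᵀ = 1 := by
    rw [transpose_submatrix, ← submatrix_mul _ _ _ _ _ Function.bijective_id, hA,
      submatrix_one_equiv]
  convert hX _ hι hιn _ hA' (z ∘ e) using 4 with ω
  rw [← euclNorm_comp_equiv _ e]
  rfl

lemma measure_euclNorm_mulVec_le (hX : SatisfiesWSBA μ n X θ L) (hθ : 0 < θ) {ρ : ℝ}
    (hρ : 0 ≤ ρ) (hι : 1 ≤ Fintype.card ι) (hιn : Fintype.card ι ≤ n - 1)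
    {A : Matrix ι (Fin n) ℝ} (hA : A * Aᵀ = 1) :
    μ {ω | euclNorm (A *ᵥ X ω) ≤ ρ * (θ * √(Fintype.card ι))} ≤
      ENNReal.ofReal (((2 * ρ + 1) * (L * θ)) ^ Fintype.card ι) := by
  set k := Fintype.card ι
  set r := θ * √k
  have hr : 0 < r := by positivity
  obtain ⟨s, hcard, hcover⟩ := exists_finset_euclNorm_sub_le ι hr (R := ρ * r) (by positivity)
  rw [show (2 * (ρ * r) + r) / r = 2 * ρ + 1 by field_simp] at hcard
  calc μ {ω | euclNorm (A *ᵥ X ω) ≤ ρ * r}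
      ≤ μ (⋃ z ∈ s, {ω | euclNorm (A *ᵥ X ω - z) ≤ r}) := measure_mono fun ω hω => by
        obtain ⟨z, hz, hdist⟩ := hcover _ hω
        exact Set.mem_biUnion hz hdist
    _ ≤ ∑ z ∈ s, μ {ω | euclNorm (A *ᵥ X ω - z) ≤ r} := measure_biUnion_finset_le _ _
    _ ≤ ∑ _z ∈ s, ENNReal.ofReal ((L * θ) ^ k) :=
        Finset.sum_le_sum fun z _ => hX.measure_euclNorm_mulVec_sub_le hι hιn hA z
    _ = ENNReal.ofReal (s.card) * ENNReal.ofReal ((L * θ) ^ k) := by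
        rw [Finset.sum_const, nsmul_eq_mul, ENNReal.ofReal_natCast]
    _ ≤ ENNReal.ofReal ((2 * ρ + 1) ^ k) * ENNReal.ofReal ((L * θ) ^ k) := by gcongr
    _ = ENNReal.ofReal (((2 * ρ + 1) * (L * θ)) ^ k) := by
        rw [← ENNReal.ofReal_mul (by positivity), ← mul_pow]

end SatisfiesWSBA

/-- there is an absolute constant `c` with the following property.  Suppose
`X` satisfies the wSBA with constants `θ`, `L`, and `T : ℝ^n → ℝ^m` and `σ ⊂ {1,...,m}` are
such that all the `|σ|` nonzero singular values of `P_σ T` are at least `γ⁻¹` (equivalently,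
`‖(P_σ T)* y‖ ≥ γ⁻¹‖y‖` for every `y` supported on `σ`), with `γ ≥ 1`.  Then for every
`τ ⊂ σ`, `P(‖P_τ T X‖ ≤ θ√|τ|) ≤ (c·γ·θ·L)^{|τ|}`. -/
theorem coordinate_small_ball_block :
    ∃ c : ℝ, 0 < c ∧
      ∀ (n m : ℕ) (Ω : Type) (_ : MeasurableSpace Ω) (μ : Measure Ω)
        (_ : IsProbabilityMeasure μ)
        (X : Ω → Fin n → ℝ) (_ : Measurable X) (θ L : ℝ), 0 < θ → 0 < L → L * θ < 1 →
        SatisfiesWSBA μ n X θ L →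
        ∀ (T : Matrix (Fin m) (Fin n) ℝ) (γ : ℝ), 1 ≤ γ →
        ∀ σ τ : Finset (Fin m), τ ⊆ σ → τ.Nonempty → τ.card ≤ n - 1 →
        (∀ y : Fin m → ℝ, (∀ i, i ∉ σ → y i = 0) →
          γ⁻¹ * euclNorm y ≤ euclNorm (T.transpose.mulVec y)) →
        μ {ω | Real.sqrt (∑ i ∈ τ, T.mulVec (X ω) i ^ 2) ≤ θ * Real.sqrt τ.card} ≤
          ENNReal.ofReal ((c * γ * θ * L) ^ τ.card) := by
  refine ⟨3, by norm_num, ?_⟩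
  intro n m Ω _ μ _ X _ θ L hθ hL _ hX T γ hγ σ τ hτσ hτ hτn hσ
  obtain ⟨A, hA, hAB⟩ := exists_mul_transpose_eq_one_euclNorm_mulVec_le (by positivity)
    (coordProj τ * T) (le_euclNorm_transpose_coordProj_mul_mulVec hτσ hσ)
  have hcard : Fintype.card τ = τ.card := Fintype.card_coe τ
  calc μ {ω | √(∑ i ∈ τ, (T *ᵥ X ω) i ^ 2) ≤ θ * √τ.card}
      ≤ μ {ω | euclNorm (A *ᵥ X ω) ≤ γ * (θ * √(Fintype.card τ))} :=
        measure_mono fun ω hω => (hAB _).trans <| by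
        rw [hcard, ← mulVec_mulVec, euclNorm_coordProj_mulVec]
        exact mul_le_mul_of_nonneg_left hω (by positivity)
    _ ≤ ENNReal.ofReal (((2 * γ + 1) * (L * θ)) ^ τ.card) := hcard ▸
        hX.measure_euclNorm_mulVec_le hθ (by positivity) (hcard ▸ hτ.card_pos) (hcard ▸ hτn) hA
    _ ≤ ENNReal.ofReal ((3 * γ * θ * L) ^ τ.card) := by
        gcongr ENNReal.ofReal (?_ ^ _)
        nlinarith [mul_pos hL hθ]
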